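/- arXiv:2110.09722 — 4 statements merged into one kernel-verified Lean document; each statement's English description precedes it below -/
import Mathlib

section
/- Let d ≥ 1 and let μ : (Fin d → ℝ) → ℝ be 1-Lipschitz with respect to the sup metric d_∞(x,y) = max_i |x_i − y_i|. Let r > 0, let C be a subset of ℝ^d of d_∞-diameter at most r, let x_1, …, x_n ∈ C, let T > 1 be real, and let ε_1, …, ε_n be independent standard Gaussian N(0,1) random variables. Define the empirical average μ̂ = (1/n) Σ_{i=1}^n (μ(x_i) + ε_i). Then with probability at least 1 − 2·T^{−8}, for every x ∈ C it holds that |μ(x) − μ̂| ≤ r + √(16 · log T / n). -/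
/-!
The sample mean splits into the average of `μ (xs i)`, which lies within `r` of `μ x` because
`μ` is 1-Lipschitz and `C` has diameter at most `r`, and the average of the noises. The sum of `n`
independent standard Gaussians is sub-Gaussian with variance proxy `n`, so the Chernoff bound on
both tails gives `|∑ i, ε i| < n √(16 log T / n)` outside an event of probability at most
`2 exp (-8 log T) = 2 T⁻⁸`.
-/

open MeasureTheory ProbabilityTheory Real

lemma abs_sub_average_le_of_lipschitzWith {X ι : Type*} [PseudoMetricSpace X] [Fintype ι]
    [Nonempty ι] {f : X → ℝ} {K : NNReal} (hf : LipschitzWith K f) {C : Set X} {r : ℝ}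
    (hC : ∀ x ∈ C, ∀ y ∈ C, dist x y ≤ r) {x : X} (hx : x ∈ C) {xs : ι → X}
    (hxs : ∀ i, xs i ∈ C) :
    |f x - (∑ i, f (xs i)) / Fintype.card ι| ≤ K * r := by
  have hcard : (0 : ℝ) < Fintype.card ι := by exact_mod_cast Fintype.card_pos
  have hsum : f x - (∑ i, f (xs i)) / Fintype.card ι
      = (∑ i, (f x - f (xs i))) / Fintype.card ι := by
    rw [Finset.sum_sub_distrib, Finset.sum_const, Finset.card_univ, nsmul_eq_mul]
    field_simp
  rw [hsum, abs_div, abs_of_pos hcard, div_le_iff₀ hcard]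
  calc |∑ i, (f x - f (xs i))| ≤ ∑ i, |f x - f (xs i)| := Finset.abs_sum_le_sum_abs _ _
    _ ≤ ∑ _i : ι, K * r := Finset.sum_le_sum fun i _ =>
        (hf.dist_le_mul x (xs i)).trans (by gcongr; exact hC x hx (xs i) (hxs i))
    _ = K * r * Fintype.card ι := by simp [mul_comm]

lemma hasSubgaussianMGF_of_map_eq_gaussianReal {Ω : Type*} [MeasurableSpace Ω] {P : Measure Ω}
    {X : Ω → ℝ} {v : NNReal} (hX : P.map X = gaussianReal 0 v) : HasSubgaussianMGF X v P := by
  have : NeZero P := ⟨by rintro rfl; simpa using congrArg (· Set.univ) hX⟩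
  refine ⟨fun t => ?_, fun t => by simp [mgf_gaussianReal hX]⟩
  rw [← mgf_pos_iff, mgf_gaussianReal hX]
  exact exp_pos _

lemma ProbabilityTheory.HasSubgaussianMGF.measureReal_le_abs_le {Ω : Type*}
    [MeasurableSpace Ω] {P : Measure Ω} {X : Ω → ℝ} {c : NNReal} (h : HasSubgaussianMGF X c P)
    {a : ℝ} (ha : 0 ≤ a) :
    P.real {ω | a ≤ |X ω|} ≤ 2 * exp (-a ^ 2 / (2 * c)) := by
  have hsplit : {ω | a ≤ |X ω|} = {ω | a ≤ X ω} ∪ {ω | a ≤ (-X) ω} := by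
    ext ω
    simp only [Set.mem_ofPred_eq, Set.mem_union, Pi.neg_apply, le_abs', le_neg]
    exact or_comm
  calc P.real {ω | a ≤ |X ω|} ≤ P.real {ω | a ≤ X ω} + P.real {ω | a ≤ (-X) ω} :=
        hsplit ▸ measureReal_union_le _ _
    _ ≤ exp (-a ^ 2 / (2 * c)) + exp (-a ^ 2 / (2 * c)) :=
        add_le_add (h.measure_ge_le ha) (h.neg.measure_ge_le ha)
    _ = 2 * exp (-a ^ 2 / (2 * c)) := (two_mul _).symm

lemma measureReal_le_abs_sum_le_of_iIndepFun_gaussianReal {Ω ι : Type*} [MeasurableSpace Ω]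
    {P : Measure Ω} [Fintype ι] {ε : ι → Ω → ℝ} (hindep : iIndepFun ε P)
    (hgauss : ∀ i, P.map (ε i) = gaussianReal 0 1) {δ : ℝ} (hδ : 0 ≤ δ) :
    P.real {ω | Fintype.card ι * δ ≤ |∑ i, ε i ω|}
      ≤ 2 * exp (-(Fintype.card ι * δ ^ 2 / 2)) := by
  have hsum : HasSubgaussianMGF (fun ω => ∑ i, ε i ω) (Fintype.card ι) P := by
    simpa using HasSubgaussianMGF.sum_of_iIndepFun hindep (s := Finset.univ)
      fun i _ => hasSubgaussianMGF_of_map_eq_gaussianReal (hgauss i)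
  refine (hsum.measureReal_le_abs_le (by positivity)).trans_eq ?_
  rcases (Fintype.card ι).eq_zero_or_pos with hcard | hcard
  · simp [hcard]
  · rw [NNReal.coe_natCast]
    congr 2
    field_simp

lemma abs_sub_average_add_le_of_lipschitzWith {X ι : Type*} [PseudoMetricSpace X] [Fintype ι]
    [Nonempty ι] {f : X → ℝ} {K : NNReal} (hf : LipschitzWith K f) {C : Set X} {r : ℝ}
    (hC : ∀ x ∈ C, ∀ y ∈ C, dist x y ≤ r) {x : X} (hx : x ∈ C) {xs : ι → X}
    (hxs : ∀ i, xs i ∈ C) {e : ι → ℝ} {δ : ℝ} (he : |∑ i, e i| ≤ Fintype.card ι * δ) :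
    |f x - (1 / Fintype.card ι : ℝ) * ∑ i, (f (xs i) + e i)| ≤ K * r + δ := by
  have hcard : (0 : ℝ) < Fintype.card ι := by exact_mod_cast Fintype.card_pos
  calc |f x - (1 / Fintype.card ι : ℝ) * ∑ i, (f (xs i) + e i)|
      = |(f x - (∑ i, f (xs i)) / Fintype.card ι) - (∑ i, e i) / Fintype.card ι| := by
        rw [Finset.sum_add_distrib]
        ring_nf
    _ ≤ |f x - (∑ i, f (xs i)) / Fintype.card ι| + |∑ i, e i| / Fintype.card ι := by
        rw [← abs_of_pos hcard, ← abs_div, abs_of_pos hcard]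
        exact abs_sub _ _
    _ ≤ K * r + δ := by
        gcongr
        · exact abs_sub_average_le_of_lipschitzWith hf hC hx hxs
        · rwa [div_le_iff₀ hcard, mul_comm]

lemma ofReal_one_sub_le_measure_compl {Ω : Type*} [MeasurableSpace Ω] {P : Measure Ω}
    [IsProbabilityMeasure P] {s : Set Ω} (hs : MeasurableSet s) {p : ℝ} (h : P.real s ≤ p) :
    ENNReal.ofReal (1 - p) ≤ P sᶜ := by
  rw [← ofReal_measureReal, probReal_compl_eq_one_sub hs]
  exact ENNReal.ofReal_le_ofReal (by linarith)

theorem stmt_1_general {Ω : Type*} [MeasurableSpace Ω] (P : Measure Ω) [IsProbabilityMeasure P]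
    (d : ℕ) (μ : (Fin d → ℝ) → ℝ) (hμ : LipschitzWith 1 μ)
    (r : ℝ) (C : Set (Fin d → ℝ))
    (hC : ∀ x ∈ C, ∀ y ∈ C, dist x y ≤ r)
    (n : ℕ) (hn : 1 ≤ n) (xs : Fin n → (Fin d → ℝ)) (hxs : ∀ i, xs i ∈ C)
    (T : ℝ) (hT : 1 < T)
    (ε : Fin n → Ω → ℝ) (hmeas : ∀ i, Measurable (ε i))
    (hindep : iIndepFun ε P)
    (hgauss : ∀ i, P.map (ε i) = gaussianReal 0 1) :
    ENNReal.ofReal (1 - 2 * T ^ (-8 : ℝ)) ≤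
      P {ω | ∀ x ∈ C,
        |μ x - (1 / n : ℝ) * ∑ i, (μ (xs i) + ε i ω)| ≤ r + Real.sqrt (16 * Real.log T / n)} := by
  have : Nonempty (Fin n) := ⟨⟨0, hn⟩⟩
  set δ := Real.sqrt (16 * Real.log T / n)
  have hδ : δ ^ 2 = 16 * Real.log T / n := sq_sqrt (by have := log_pos hT; positivity)
  have htail : P.real {ω | n * δ ≤ |∑ i, ε i ω|} ≤ 2 * T ^ (-8 : ℝ) := by
    have h := measureReal_le_abs_sum_le_of_iIndepFun_gaussianReal hindep hgauss
      (show 0 ≤ δ from sqrt_nonneg _)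
    rw [Fintype.card_fin, hδ] at h
    convert h using 3
    rw [rpow_def_of_pos (by linarith)]
    field_simp
    ring_nf
  refine (ofReal_one_sub_le_measure_compl (measurableSet_le measurable_const (by fun_prop))
    htail).trans (measure_mono fun ω hω x hx => ?_)
  simp only [Set.mem_compl_iff, Set.mem_ofPred_eq, not_le] at hω
  simpa using abs_sub_average_add_le_of_lipschitzWith hμ hC hx hxs (e := fun i => ε i ω)
    (by simpa using hω.le)

/-- Single-cube concentration: for a 1-Lipschitz reward `μ` on `ℝ^d` (sup metric),
arms `xs i` lying in a set `C` of diameter at most `r`, and i.i.d. standard Gaussian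
noises, the empirical average of the noisy rewards is within `r + √(16 log T / n)`
of `μ x` for every `x ∈ C`, with probability at least `1 - 2 T⁻⁸`. -/
theorem stmt_1 {Ω : Type*} [MeasurableSpace Ω] (P : Measure Ω) [IsProbabilityMeasure P]
    (d : ℕ) (hd : 1 ≤ d) (μ : (Fin d → ℝ) → ℝ) (hμ : LipschitzWith 1 μ)
    (r : ℝ) (hr : 0 < r) (C : Set (Fin d → ℝ))
    (hC : ∀ x ∈ C, ∀ y ∈ C, dist x y ≤ r)
    (n : ℕ) (hn : 1 ≤ n) (xs : Fin n → (Fin d → ℝ)) (hxs : ∀ i, xs i ∈ C)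
    (T : ℝ) (hT : 1 < T)
    (ε : Fin n → Ω → ℝ) (hmeas : ∀ i, Measurable (ε i))
    (hindep : iIndepFun ε P)
    (hgauss : ∀ i, P.map (ε i) = gaussianReal 0 1) :
    ENNReal.ofReal (1 - 2 * T ^ (-8 : ℝ)) ≤
      P {ω | ∀ x ∈ C,
        |μ x - (1 / n : ℝ) * ∑ i, (μ (xs i) + ε i ω)| ≤ r + Real.sqrt (16 * Real.log T / n)} :=
  stmt_1_general P d μ hμ r C hC n hn xs hxs T hT ε hmeas hindep hgauss
end

section
/- Let q ∈ (0,1) be a real number, let B ≥ 1 be a natural number, and let t_1, …, t_B be real numbers with 0 < t_1 ≤ t_2 ≤ … ≤ t_B = T. Then max{ t_1, max_{2 ≤ k ≤ B} t_k / t_{k−1}^{q} } ≥ T^{(1−q)/(1−q^B)}. -/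
/-!
If every ratio `t k / t (k-1) ^ q` and `t 1` stayed below `M`, then `t k < M * t (k-1) ^ q`
unrolls to `t k < M ^ (1 + q + ⋯ + q ^ (k-1))`. For `M = T ^ ((1 - q) / (1 - q ^ B))` the
exponent at `k = B` is `(1 - q ^ B) / (1 - q)`, so the bound reads `t B < T`, a contradiction.
-/

open Finset Real

lemma le_of_forall_pred_le {α : Type*} [Preorder α] {t : ℕ → α} {B : ℕ}
    (hmono : ∀ k, 2 ≤ k → k ≤ B → t (k - 1) ≤ t k) :
    ∀ k, 1 ≤ k → k ≤ B → t 1 ≤ t k := by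
  intro k hk hkB
  induction k, hk using Nat.le_induction with
  | base => exact le_rfl
  | succ n hn ih => exact (ih (by omega)).trans (hmono (n + 1) (by omega) hkB)

lemma lt_rpow_geom_sum_of_lt_mul_rpow {q M : ℝ} (hq : 0 < q) {t : ℕ → ℝ} {n : ℕ}
    (hpos : ∀ k, 1 ≤ k → k ≤ n → 0 < t k) (h1 : t 1 < M)
    (hstep : ∀ k, 2 ≤ k → k ≤ n → t k < M * t (k - 1) ^ q) (hn : 1 ≤ n) :
    t n < M ^ ∑ i ∈ range n, q ^ i := by
  have hM : 0 < M := (hpos 1 le_rfl hn).trans h1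
  suffices ∀ m, 1 ≤ m → m ≤ n → t m < M ^ ∑ i ∈ range m, q ^ i from this n hn le_rfl
  intro m hm hmn
  induction m, hm using Nat.le_induction with
  | base => simpa using h1
  | succ m hm ih =>
    calc t (m + 1) < M * t m ^ q := hstep (m + 1) (by omega) hmn
      _ < M * (M ^ ∑ i ∈ range m, q ^ i) ^ q := by
        gcongr
        · exact (hpos m hm (by omega)).le
        · exact ih (by omega)
      _ = M ^ ∑ i ∈ range (m + 1), q ^ i := by
        rw [geom_sum_succ, rpow_add hM, rpow_one, ← rpow_mul hM.le, mul_comm q, mul_comm M]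

/-- Grid-optimization step of the static lower bound: for any grid
`0 < t_1 ≤ … ≤ t_B = T` and `q ∈ (0,1)`, the maximum of `t_1` and the quantities
`t_k / t_{k-1}^q` (`2 ≤ k ≤ B`) is at least `T^{(1-q)/(1-q^B)}`. -/
theorem stmt_5 (q : ℝ) (hq : q ∈ Set.Ioo (0 : ℝ) 1) (B : ℕ) (hB : 1 ≤ B)
    (t : ℕ → ℝ) (T : ℝ) (ht1 : 0 < t 1)
    (hmono : ∀ k, 2 ≤ k → k ≤ B → t (k - 1) ≤ t k) (htB : t B = T) :
    T ^ ((1 - q) / (1 - q ^ B)) ≤ t 1 ∨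
      ∃ k, 2 ≤ k ∧ k ≤ B ∧ T ^ ((1 - q) / (1 - q ^ B)) ≤ t k / t (k - 1) ^ q := by
  obtain ⟨hq0, hq1⟩ := hq
  by_contra! ⟨h1, hratio⟩
  have hpos : ∀ k, 1 ≤ k → k ≤ B → 0 < t k := fun k hk hkB =>
    ht1.trans_le (le_of_forall_pred_le hmono k hk hkB)
  have hT : 0 < T := htB ▸ hpos B hB le_rfl
  have hstep : ∀ k, 2 ≤ k → k ≤ B → t k < T ^ ((1 - q) / (1 - q ^ B)) * t (k - 1) ^ q :=
    fun k hk hkB => (div_lt_iff₀ (rpow_pos_of_pos (hpos _ (by omega) (by omega)) q)).1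
      (hratio k hk hkB)
  have hexp : (1 - q) / (1 - q ^ B) * ∑ i ∈ range B, q ^ i = 1 := by
    have hqB : 1 - q ^ B ≠ 0 := (sub_pos.2 (pow_lt_one₀ hq0.le hq1 (by omega))).ne'
    have hq : q - 1 ≠ 0 := (sub_neg.2 hq1).ne
    rw [geom_sum_eq hq1.ne]
    field_simp
    ring
  have := lt_rpow_geom_sum_of_lt_mul_rpow hq0 hpos h1 hstep hB
  rw [← rpow_mul hT.le, hexp, rpow_one, htB] at this
  exact lt_irrefl T this
end

section
/- Let Q_1, …, Q_n be probability measures on a common measurable space (Ω, 𝓕), let Ψ : Ω → {1,…,n} be a measurable function (a test), and let G be a tree on the vertex set {1,…,n} with edge set E. Then (1/n) · Σ_{i=1}^{n} Q_i({ω : Ψ(ω) ≠ i}) ≥ (1/n) · Σ_{{i,j} ∈ E} (Q_i ⊓ Q_j)(Ω), where Q_i ⊓ Q_j denotes the infimum (greatest lower bound) of the two measures, so that (Q_i ⊓ Q_j)(Ω) = ∫ min{dQ_i, dQ_j} = 1 − TV(Q_i, Q_j). -/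
/-!
Split `Ω` into the decision regions `{Ψ = k}`. Rooting the tree at `k` matches every edge with its
endpoint farther from `k`, so on `{Ψ = k}` the edge masses of the infima `Q i ⊓ Q j` are bounded by
`∑_{v ≠ k} Q v {Ψ = k}`, the mass of wrong decisions on that region. Summing over `k` gives the claim.
-/

open MeasureTheory
open scoped ENNReal

namespace SimpleGraph.IsTree

variable {V : Type*} {G : SimpleGraph V} (hG : G.IsTree) (r : V) {v w : V}

noncomputable def pathFrom (v : V) : G.Walk r v := (hG.existsUnique_path r v).choose

lemma isPath_pathFrom (v : V) : (hG.pathFrom r v).IsPath := (hG.existsUnique_path r v).choose_spec.1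

lemma eq_pathFrom {p : G.Walk r v} (hp : p.IsPath) : p = hG.pathFrom r v :=
  (hG.existsUnique_path r v).choose_spec.2 p hp

noncomputable def parent (v : V) : V := (hG.pathFrom r v).penultimate

lemma parent_self : hG.parent r r = r := by
  rw [parent, ← hG.eq_pathFrom r Walk.IsPath.nil, Walk.penultimate_nil]

lemma adj_parent (hv : v ≠ r) : G.Adj (hG.parent r v) v :=
  (hG.pathFrom r v).adj_penultimate (Walk.not_nil_of_ne hv.symm)

lemma parent_eq_or_parent_eq_of_adj (h : G.Adj v w) : hG.parent r w = v ∨ hG.parent r v = w := by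
  by_cases hv : v ∈ (hG.pathFrom r w).support
  · exact .inl (hG.isAcyclic.eq_penultimate_of_adj_end (hG.isPath_pathFrom r w) h.symm hv).symm
  · exact .inr (hG.isAcyclic.eq_penultimate_of_adj_end (hG.isPath_pathFrom r v) h
      (hG.isAcyclic.mem_support_of_ne_mem_support_of_adj_of_isPath (hG.isPath_pathFrom r v)
        (hG.isPath_pathFrom r w) h hv)).symm

lemma length_pathFrom_parent (hv : v ≠ r) :
    (hG.pathFrom r v).length = (hG.pathFrom r (hG.parent r v)).length + 1 := by
  have h := hG.isAcyclic.path_concat (hG.isPath_pathFrom r _) (hG.isPath_pathFrom r v)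
    (hG.adj_parent r hv) (Walk.getVert_mem_support _ _)
  rw [h, Walk.length_concat]

lemma not_parent_eq_and_parent_eq (hvw : v ≠ w) :
    ¬ (hG.parent r v = w ∧ hG.parent r w = v) := by
  rintro ⟨rfl, hw⟩
  have hv : v ≠ r := fun h => hvw (by rw [h]; exact (hG.parent_self r).symm)
  have hw' : hG.parent r v ≠ r := fun h => hv (by rw [← hw, h, parent_self])
  have := hG.length_pathFrom_parent r hv
  have := hG.length_pathFrom_parent r hw'
  rw [hw] at this
  omega

lemma ne_of_adj_of_parent_eq (h : G.Adj v w) (hw : hG.parent r w = v) : w ≠ r := by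
  rintro rfl
  rw [parent_self] at hw
  exact h.ne hw.symm

theorem sum_edgeFinset_eq_sum_parent [Fintype V] [DecidableEq V] [Fintype G.edgeSet]
    {M : Type*} [AddCommMonoid M] (f : Sym2 V → M) :
    ∑ e ∈ G.edgeFinset, f e = ∑ v ∈ ({r} : Finset V)ᶜ, f s(v, hG.parent r v) := by
  refine (Finset.sum_bij (fun v _ => s(v, hG.parent r v)) (fun v hv => ?_) ?_ ?_ fun _ _ => rfl).symm
  · simpa using (hG.adj_parent r (by simpa using hv)).symm
  · intro v _ w _ h
    rcases Sym2.eq_iff.1 h with ⟨rfl, -⟩ | ⟨hv, hw⟩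
    · rfl
    · by_contra hvw
      exact hG.not_parent_eq_and_parent_eq r hvw ⟨hw, hv.symm⟩
  · simp only [SimpleGraph.mem_edgeFinset, Sym2.forall, SimpleGraph.mem_edgeSet]
    intro v w h
    rcases hG.parent_eq_or_parent_eq_of_adj r h with hw | hv
    · exact ⟨w, by simpa using hG.ne_of_adj_of_parent_eq r h hw, by rw [hw, Sym2.eq_swap]⟩
    · exact ⟨v, by simpa using hG.ne_of_adj_of_parent_eq r h.symm hv, by rw [hv]⟩

end SimpleGraph.IsTree

namespace MeasureTheory.Measure

variable {Ω V : Type*} [MeasurableSpace Ω]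

noncomputable def pairInf (μ : V → Measure Ω) (s : Set Ω) : Sym2 V → ℝ≥0∞ :=
  Sym2.lift ⟨fun i j => (μ i ⊓ μ j) s,
    fun i j => congrArg (fun ν : Measure Ω => ν s) (inf_comm (μ i) (μ j))⟩

@[simp] lemma pairInf_mk (μ : V → Measure Ω) (s : Set Ω) (i j : V) :
    pairInf μ s s(i, j) = (μ i ⊓ μ j) s := rfl

lemma sum_pairInf_le_of_isTree [Fintype V] [DecidableEq V] {G : SimpleGraph V} [Fintype G.edgeSet]
    (hG : G.IsTree) (μ : V → Measure Ω) (s : Set Ω) (r : V) :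
    ∑ e ∈ G.edgeFinset, pairInf μ s e ≤ ∑ v ∈ ({r} : Finset V)ᶜ, μ v s := by
  rw [hG.sum_edgeFinset_eq_sum_parent r]
  exact Finset.sum_le_sum fun v _ => inf_le_left (a := μ v) s

variable [Fintype V] [MeasurableSpace V] [MeasurableSingletonClass V] {Ψ : Ω → V}

lemma measure_univ_eq_sum_fiber (ν : Measure Ω) (hΨ : Measurable Ψ) :
    ν Set.univ = ∑ k, ν (Ψ ⁻¹' {k}) := by
  rw [sum_measure_preimage_singleton _ fun k _ => hΨ (measurableSet_singleton k)]
  simp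

lemma measure_ne_eq_sum_fiber [DecidableEq V] (ν : Measure Ω) (hΨ : Measurable Ψ) (i : V) :
    ν {ω | Ψ ω ≠ i} = ∑ k ∈ ({i} : Finset V)ᶜ, ν (Ψ ⁻¹' {k}) := by
  rw [sum_measure_preimage_singleton _ fun k _ => hΨ (measurableSet_singleton k)]
  congr 1
  ext ω
  simp

lemma pairInf_univ_eq_sum_fiber (μ : V → Measure Ω) (hΨ : Measurable Ψ) (e : Sym2 V) :
    pairInf μ Set.univ e = ∑ k, pairInf μ (Ψ ⁻¹' {k}) e := by
  induction e using Sym2.ind with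
  | _ i j => simpa only [pairInf_mk] using measure_univ_eq_sum_fiber (μ i ⊓ μ j) hΨ

theorem sum_pairInf_univ_le_sum_measure_ne [DecidableEq V] {G : SimpleGraph V}
    [Fintype G.edgeSet] (hG : G.IsTree) (μ : V → Measure Ω) (hΨ : Measurable Ψ) :
    ∑ e ∈ G.edgeFinset, pairInf μ Set.univ e ≤ ∑ i, μ i {ω | Ψ ω ≠ i} := by
  calc ∑ e ∈ G.edgeFinset, pairInf μ Set.univ e
      = ∑ k, ∑ e ∈ G.edgeFinset, pairInf μ (Ψ ⁻¹' {k}) e := by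
        simp only [pairInf_univ_eq_sum_fiber μ hΨ]; exact Finset.sum_comm
    _ ≤ ∑ k, ∑ i ∈ ({k} : Finset V)ᶜ, μ i (Ψ ⁻¹' {k}) :=
        Finset.sum_le_sum fun k _ => sum_pairInf_le_of_isTree hG μ _ k
    _ = ∑ i, ∑ k ∈ ({i} : Finset V)ᶜ, μ i (Ψ ⁻¹' {k}) :=
        Finset.sum_comm' fun k i => by simp [ne_comm, and_comm]
    _ = ∑ i, μ i {ω | Ψ ω ≠ i} := by
        simp only [measure_ne_eq_sum_fiber _ hΨ]

end MeasureTheory.Measure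

/-- Part 1 of the multiple-hypothesis-testing lemma of Gao et al.: for probability
measures `Q_1, …, Q_n`, any test `Ψ`, and any tree `G` on `{1,…,n}` with edge set `E`,
`(1/n) Σ_i Q_i(Ψ ≠ i) ≥ (1/n) Σ_{{i,j} ∈ E} (Q_i ⊓ Q_j)(Ω)`. -/
theorem stmt_7 {Ω : Type*} [MeasurableSpace Ω] {n : ℕ}
    (Q : Fin n → Measure Ω)
    (Ψ : Ω → Fin n) (hΨ : Measurable Ψ)
    (G : SimpleGraph (Fin n)) [DecidableRel G.Adj] (hG : G.IsTree) :
    (n : ℝ≥0∞)⁻¹ * ∑ e ∈ G.edgeFinset,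
        Sym2.lift ⟨fun i j => (Q i ⊓ Q j) Set.univ, fun i j => by simp only []; rw [inf_comm]⟩ e
      ≤ (n : ℝ≥0∞)⁻¹ * ∑ i, Q i {ω | Ψ ω ≠ i} :=
  mul_le_mul_right (Measure.sum_pairInf_univ_le_sum_measure_ne hG Q hΨ) _
end

section
/- Let (X, dist) be a metric space, let r > 0, and let u_1, …, u_M ∈ X (M ≥ 2) satisfy dist(u_m, u_n) ≥ r for all m ≠ n. Define μ_1 : X → ℝ by μ_1(x) = max{ r/2, max_{1 ≤ j ≤ M} ( v_{1,j} − dist(x, u_j) ) } where v_{1,1} = (3/4)r and v_{1,j} = (5/8)r for j ≠ 1; and for each i with 2 ≤ i ≤ M define μ_i : X → ℝ by μ_i(x) = max{ r/2, max_{1 ≤ j ≤ M} ( v_{i,j} − dist(x, u_j) ) } where v_{i,1} = (3/4)r, v_{i,i} = (7/8)r, and v_{i,j} = (5/8)r for j ∉ {1, i}. Then for every i with 2 ≤ i ≤ M: (a) μ_i(x) = μ_1(x) for every x with dist(x, u_i) ≥ (3/8)r; and (b) μ_1(x) ≤ μ_i(x) ≤ μ_1(x) + r/4 for every x ∈ X.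 -/
/-!
Instance `i` differs from the base instance only in its peak at `u i`, raised from `5/8·r` to
`7/8·r`. Both rewards are maxima of a floor `r/2` and cones, and each cone of `μ i` lies at most
`r/4` above the corresponding cone of `μ 1`, which bounds `μ i - μ 1` between `0` and `r/4`. The
raised cone `7/8·r - dist x (u i)` sits below the floor once `dist x (u i) ≥ 3/8·r`, so there the
two maxima coincide.
-/

section MaxSup

variable {ι α : Type*} [AddCommGroup α] [LinearOrder α] [IsOrderedAddMonoid α]

theorem max_sup'_le_max_sup'_add {s : Finset ι} (hs : s.Nonempty) {f g : ι → α} {c δ : α}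
    (hδ : 0 ≤ δ) (h : ∀ j ∈ s, g j ≤ max c (f j) + δ) :
    max c (s.sup' hs g) ≤ max c (s.sup' hs f) + δ :=
  max_le (le_add_of_le_of_nonneg (le_max_left _ _) hδ) <| Finset.sup'_le hs g fun j hj =>
    (h j hj).trans <| by gcongr; exact Finset.le_sup' f hj

theorem max_sup'_le_max_sup' {s : Finset ι} (hs : s.Nonempty) {f g : ι → α} {c : α}
    (h : ∀ j ∈ s, g j ≤ max c (f j)) :
    max c (s.sup' hs g) ≤ max c (s.sup' hs f) := by
  simpa only [add_zero] using
    max_sup'_le_max_sup'_add hs (f := f) (g := g) (c := c) le_rfl fun j hj => by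
      rw [add_zero]; exact h j hj

end MaxSup

/-- Verification properties of the hard instances in the static lower bound (Theorem 3):
with arms `u_1, …, u_M` pairwise `r`-separated, peak values
`v i j = 3/4·r` if `j = 1`, `7/8·r` if `j = i` (`i ≥ 2`), `5/8·r` otherwise, and rewards
`μ i x = max(r/2, max_{1 ≤ j ≤ M} (v i j − dist x (u j)))`, every alternative instance
`2 ≤ i ≤ M` (a) agrees with the base instance `μ 1` at every `x` with
`dist(x, u i) ≥ (3/8) r`, and (b) satisfies `μ 1 ≤ μ i ≤ μ 1 + r/4` everywhere. -/
theorem stmt_13 {X : Type*} [MetricSpace X] (M : ℕ) (hM : 2 ≤ M)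
    (r : ℝ) (hr : 0 < r) (u : ℕ → X)
    (v : ℕ → ℕ → ℝ)
    (hv : ∀ i j, v i j =
      if j = 1 then 3 / 4 * r else if j = i then 7 / 8 * r else 5 / 8 * r)
    (μ : ℕ → X → ℝ)
    (hμ : ∀ i x, μ i x = max (r / 2)
      ((Finset.Icc 1 M).sup' (Finset.nonempty_Icc.mpr (by omega))
        fun j => v i j - dist x (u j))) :
    ∀ i, 2 ≤ i → i ≤ M →
      (∀ x : X, 3 / 8 * r ≤ dist x (u i) → μ i x = μ 1 x) ∧
      (∀ x : X, μ 1 x ≤ μ i x ∧ μ i x ≤ μ 1 x + r / 4) := by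
  intro i hi2 hiM
  have hs : (Finset.Icc 1 M).Nonempty := Finset.nonempty_Icc.mpr (by omega)
  have v_mono : ∀ j, v 1 j ≤ v i j := fun j => by rw [hv, hv]; split_ifs <;> linarith
  have v_le_add : ∀ j, v i j ≤ v 1 j + r / 4 := fun j => by rw [hv, hv]; split_ifs <;> linarith
  have v_eq : ∀ j, j ≠ i → v i j = v 1 j := fun j hj => by rw [hv, hv]; split_ifs <;> rfl
  have v_peak : v i i = 7 / 8 * r := by rw [hv, if_neg (by omega), if_pos rfl]
  have μ_mono : ∀ x, μ 1 x ≤ μ i x := fun x => by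
    rw [hμ, hμ]
    exact max_sup'_le_max_sup' hs fun j _ => le_max_of_le_right (by linarith [v_mono j])
  refine ⟨fun x hx => le_antisymm ?_ (μ_mono x), fun x => ⟨μ_mono x, ?_⟩⟩
  · rw [hμ, hμ]
    refine max_sup'_le_max_sup' hs fun j _ => ?_
    rcases eq_or_ne j i with rfl | hji
    · exact le_max_of_le_left (by linarith [v_peak])
    · exact le_max_of_le_right (by rw [v_eq j hji])
  · rw [hμ, hμ]
    refine max_sup'_le_max_sup'_add hs (by positivity) fun j _ => ?_
    linarith [v_le_add j, le_max_right (r / 2) (v 1 j - dist x (u j))]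
end
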